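/- arXiv:1901.09307 — 3 statements merged into one kernel-verified Lean document; each statement's English description precedes it below -/
import Mathlib

section
/- The function L_min(s) = Σ_{i=1}^M s_i λ_i/θ_i^u + (Σ_i (1−s_i)λ_i)/θ^u + (Σ_i √((1−s_i)λ_i + ρ s_i λ_i))²/φ, defined for s ∈ [0,1]^M, is concave on [0,1]^M. -/
/-!
The two leading terms are affine in `s`. The third is `G ∘ c / φ`, where `c` is the affine map
`s ↦ ((1 - sᵢ) λᵢ + ρ sᵢ λᵢ)ᵢ`, which sends `[0,1]^M` into the nonnegative orthant, and
`G x = (∑ᵢ √xᵢ)²`. On the orthant `G` is positively homogeneous and superadditive, hence concave;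
superadditivity is the triangle inequality in `ℂ ≅ ℝ²` for the vectors `(√xᵢ, √yᵢ)`, whose norms
are `√(xᵢ + yᵢ)`.
-/

open Finset Real

theorem sq_sum_sqrt_add_sq_sum_sqrt_le {ι : Type*} (t : Finset ι) {x y : ι → ℝ}
    (hx : ∀ i ∈ t, 0 ≤ x i) (hy : ∀ i ∈ t, 0 ≤ y i) :
    (∑ i ∈ t, √(x i)) ^ 2 + (∑ i ∈ t, √(y i)) ^ 2 ≤ (∑ i ∈ t, √(x i + y i)) ^ 2 := by
  set z : ι → ℂ := fun i => ⟨√(x i), √(y i)⟩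
  have hz : ∀ i ∈ t, ‖z i‖ = √(x i + y i) := fun i hi => by
    rw [Complex.norm_def, Complex.normSq_mk, ← sq, ← sq, sq_sqrt (hx i hi), sq_sqrt (hy i hi)]
  have hsum : ‖∑ i ∈ t, z i‖ ^ 2 = (∑ i ∈ t, √(x i)) ^ 2 + (∑ i ∈ t, √(y i)) ^ 2 := by
    rw [Complex.sq_norm, Complex.normSq_apply, Complex.re_sum, Complex.im_sum]
    ring
  rw [← hsum, ← sum_congr rfl hz]
  exact pow_le_pow_left₀ (norm_nonneg _) (norm_sum_le _ _) 2

theorem sq_sum_sqrt_mul {ι : Type*} (t : Finset ι) {a : ℝ} (ha : 0 ≤ a) (x : ι → ℝ) :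
    (∑ i ∈ t, √(a * x i)) ^ 2 = a * (∑ i ∈ t, √(x i)) ^ 2 := by
  simp_rw [sqrt_mul ha, ← mul_sum, mul_pow, sq_sqrt ha]

theorem concaveOn_sq_sum_sqrt {ι : Type*} [Fintype ι] :
    ConcaveOn ℝ (Set.Ici 0) fun x : ι → ℝ => (∑ i, √(x i)) ^ 2 := by
  refine ⟨convex_Ici 0, fun x hx y hy a b ha hb _ => ?_⟩
  simpa only [smul_eq_mul, Pi.add_apply, Pi.smul_apply, sq_sum_sqrt_mul _ ha, sq_sum_sqrt_mul _ hb]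
    using sq_sum_sqrt_add_sq_sum_sqrt_le univ (fun i _ => mul_nonneg ha (hx i))
      (fun i _ => mul_nonneg hb (hy i))

theorem concaveOn_sq_sum_sqrt_lineMap {ι : Type*} [Fintype ι] {a b : ι → ℝ} (ha : 0 ≤ a)
    (hb : 0 ≤ b) :
    ConcaveOn ℝ (Set.Icc 0 1) fun s : ι → ℝ => (∑ i, √((1 - s i) * a i + s i * b i)) ^ 2 := by
  let c : (ι → ℝ) →ᵃ[ℝ] ι → ℝ :=
    AffineMap.pi fun i => (AffineMap.lineMap (a i) (b i)).comp (LinearMap.proj i).toAffineMap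
  have hc : ∀ s i, c s i = (1 - s i) * a i + s i * b i := fun s i => by
    simp [c, AffineMap.lineMap_apply_module]
  have hmaps : Set.Icc 0 1 ⊆ c ⁻¹' Set.Ici 0 := fun s hs i => by
    rw [hc]
    exact add_nonneg (mul_nonneg (sub_nonneg.2 (hs.2 i)) (ha i)) (mul_nonneg (hs.1 i) (hb i))
  exact ((concaveOn_sq_sum_sqrt.comp_affineMap c).subset hmaps (convex_Icc 0 1)).congr
    fun s _ => by simp only [Function.comp_apply, hc]

theorem Lmin_concave_general
    (M : ℕ) (lam θu : Fin M → ℝ) (θ φ ρ : ℝ)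
    (hlam : ∀ i, 0 < lam i) (hφ : 0 < φ) (hρ0 : 0 < ρ) :
    ConcaveOn ℝ (Set.Icc (0 : Fin M → ℝ) 1)
      (fun s =>
        (∑ i, s i * lam i / θu i) + (∑ i, (1 - s i) * lam i) / θ +
          (∑ i, Real.sqrt ((1 - s i) * lam i + ρ * s i * lam i)) ^ 2 / φ) := by
  let ℓ : (Fin M → ℝ) →ₗ[ℝ] ℝ := ∑ i, (lam i / θu i - lam i / θ) • LinearMap.proj i
  have hℓ : ∀ s, ℓ s + (∑ i, lam i) / θ =
      (∑ i, s i * lam i / θu i) + (∑ i, (1 - s i) * lam i) / θ := fun s => by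
    simp only [ℓ, LinearMap.sum_apply, LinearMap.smul_apply, LinearMap.proj_apply, smul_eq_mul,
      sum_div, ← sum_add_distrib]
    exact sum_congr rfl fun i _ => by ring
  have hG := concaveOn_sq_sum_sqrt_lineMap (a := lam) (b := fun i => ρ * lam i)
    (fun i => (hlam i).le) (fun i => mul_nonneg hρ0.le (hlam i).le)
  refine (((ℓ.concaveOn (convex_Icc 0 1)).add_const ((∑ i, lam i) / θ)).add
    (hG.smul (inv_nonneg.2 hφ.le))).congr fun s _ => ?_
  simp only [Pi.add_apply, hℓ, smul_eq_mul, inv_mul_eq_div, mul_left_comm (s _) ρ,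
    mul_assoc]

theorem Lmin_concave
    (M : ℕ) (hM : 1 ≤ M) (lam θu : Fin M → ℝ) (θ φ ρ : ℝ)
    (hlam : ∀ i, 0 < lam i) (hθu : ∀ i, 0 < θu i)
    (hθ : 0 < θ) (hφ : 0 < φ) (hρ0 : 0 < ρ) (hρ1 : ρ < 1) :
    ConcaveOn ℝ (Set.Icc (0 : Fin M → ℝ) 1)
      (fun s =>
        (∑ i, s i * lam i / θu i) + (∑ i, (1 - s i) * lam i) / θ +
          (∑ i, Real.sqrt ((1 - s i) * lam i + ρ * s i * lam i)) ^ 2 / φ) :=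
  Lmin_concave_general M lam θu θ φ ρ hlam hφ hρ0
end

section
/- For every positive real Z, every M ≥ 1, positive reals λ_1,…,λ_M and A_1,…,A_M, and every vector x ∈ ℝ^M, the quadratic form Σ_{i≠j} Z λ_i λ_j x_i x_j/(A_i A_j) − Σ_i Z λ_i² x_i² (Σ_{j≠i} A_j)/A_i³ is nonpositive; i.e., the Hessian matrix H with H_{ii} = −Z λ_i²(Σ_{j≠i} A_j)/A_i³ and H_{ij} = Z λ_i λ_j/(A_i A_j) for i≠j is negative semidefinite. -/
open Finset

theorem hessian_negative_semidefinite
    (Z : ℝ) (hZ : 0 < Z) (M : ℕ) (hM : 1 ≤ M)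
    (lam A : Fin M → ℝ) (hlam : ∀ i, 0 < lam i) (hA : ∀ i, 0 < A i)
    (x : Fin M → ℝ) :
    (∑ i, ∑ j ∈ Finset.univ.erase i,
        Z * lam i * lam j * x i * x j / (A i * A j)) -
      (∑ i, Z * (lam i) ^ 2 * (x i) ^ 2 *
        (∑ j ∈ Finset.univ.erase i, A j) / (A i) ^ 3) ≤ 0 := by
  set h : Fin M → Fin M → ℝ := fun i j =>
    Z * lam i * lam j * x i * x j / (A i * A j)
      - Z * (lam i) ^ 2 * (x i) ^ 2 * A j / (A i) ^ 3 with hh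
  have key : (∑ i, ∑ j ∈ Finset.univ.erase i,
        Z * lam i * lam j * x i * x j / (A i * A j)) -
      (∑ i, Z * (lam i) ^ 2 * (x i) ^ 2 *
        (∑ j ∈ Finset.univ.erase i, A j) / (A i) ^ 3)
      = ∑ i, ∑ j ∈ Finset.univ.erase i, h i j := by
    rw [← Finset.sum_sub_distrib]
    refine Finset.sum_congr rfl fun i _ => ?_
    rw [Finset.mul_sum, Finset.sum_div, ← Finset.sum_sub_distrib]
  rw [key]
  set S := ∑ i, ∑ j ∈ Finset.univ.erase i, h i j with hS
  have swap : S = ∑ i, ∑ j ∈ Finset.univ.erase i, h j i := by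
    rw [hS]
    exact Finset.sum_comm' (fun a b => by
      simp [Finset.mem_erase, and_comm, eq_comm])
  have pair : ∀ i j : Fin M, i ≠ j → h i j + h j i ≤ 0 := by
    intro i j _
    have hAi := hA i; have hAj := hA j
    have key2 : h i j + h j i =
        - (Z * (lam i * x i / A i * A j - lam j * x j / A j * A i)^2 / (A i * A j)) := by
      simp only [hh]
      field_simp
      ring
    rw [key2]
    have : 0 ≤ Z * (lam i * x i / A i * A j - lam j * x j / A j * A i)^2 / (A i * A j) :=
      by positivity
    linarith
  have h2 : 2 * S ≤ 0 := by
    have : 2 * S = ∑ i, ∑ j ∈ Finset.univ.erase i, (h i j + h j i) := by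
      have e : ∀ i : Fin M, ∑ j ∈ Finset.univ.erase i, (h i j + h j i)
          = (∑ j ∈ Finset.univ.erase i, h i j) + ∑ j ∈ Finset.univ.erase i, h j i :=
        fun i => Finset.sum_add_distrib
      simp only [e, Finset.sum_add_distrib, ← hS, ← swap, two_mul]
    rw [this]
    apply Finset.sum_nonpos
    intro i _
    apply Finset.sum_nonpos
    intro j hj
    exact pair i j (Finset.ne_of_mem_erase hj).symm
  linarith
end

section
/- For the single-parent, M-children model, the minimal latency after optimal resource allocation, L_min(s) = Σ_i s_iλ_i/θ_i^u + (Σ_i(1−s_i)λ_i)/θ^u + (Σ_i √(λ_i(1−(1−ρ)s_i)))²/φ, satisfies L(s,θ,φ') ≥ L_min(s) for every feasible allocation: θ_i ≤ θ_i^u (with θ_i > 0), θ' ≤ θ^u (θ' > 0), φ'_i > 0 with Σ_i φ'_i ≤ φ, where L(s,θ,φ') = Σ_i s_iλ_i/θ_i + (Σ_i(1−s_i)λ_i)/θ' + Σ_i λ_i(1−(1−ρ)s_i)/φ'_i. -/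
open Finset Real

theorem Lmin_is_lower_bound
    (M : ℕ) (hM : 1 ≤ M) (lam s θu θa φi : Fin M → ℝ) (θ θ' φ ρ : ℝ)
    (hlam : ∀ i, 0 < lam i) (hs : ∀ i, s i ∈ Set.Icc (0 : ℝ) 1)
    (hθu : ∀ i, 0 < θu i) (hθ : 0 < θ) (hφ : 0 < φ)
    (hρ0 : 0 < ρ) (hρ1 : ρ < 1)
    (hθa_pos : ∀ i, 0 < θa i) (hθa : ∀ i, θa i ≤ θu i)
    (hθ'pos : 0 < θ') (hθ' : θ' ≤ θ)
    (hφi : ∀ i, 0 < φi i) (hφsum : ∑ i, φi i ≤ φ) :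
    (∑ i, s i * lam i / θu i) + (∑ i, (1 - s i) * lam i) / θ +
        (∑ i, Real.sqrt (lam i * (1 - (1 - ρ) * s i))) ^ 2 / φ ≤
      (∑ i, s i * lam i / θa i) + (∑ i, (1 - s i) * lam i) / θ' +
        ∑ i, lam i * (1 - (1 - ρ) * s i) / φi i := by
  set a : Fin M → ℝ := fun i => lam i * (1 - (1 - ρ) * s i) with ha_def
  have ha : ∀ i, 0 < a i := by
    intro i
    have h1 := (hs i).1
    have h2 := (hs i).2
    have : (1 - ρ) * s i < 1 := by nlinarith
    exact mul_pos (hlam i) (by linarith)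
  have h1 : (∑ i, s i * lam i / θu i) ≤ ∑ i, s i * lam i / θa i := by
    apply Finset.sum_le_sum
    intro i _
    exact div_le_div_of_nonneg_left (mul_nonneg (hs i).1 (hlam i).le)
      (hθa_pos i) (hθa i)
  have h2 : (∑ i, (1 - s i) * lam i) / θ ≤ (∑ i, (1 - s i) * lam i) / θ' :=
    div_le_div_of_nonneg_left
      (Finset.sum_nonneg fun i _ => mul_nonneg (by linarith [(hs i).2]) (hlam i).le)
      hθ'pos hθ'
  have hCS : (∑ i, Real.sqrt (a i)) ^ 2 ≤ (∑ i, a i / φi i) * (∑ i, φi i) :=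
    Finset.sum_sq_le_sum_mul_sum_of_sq_eq_mul Finset.univ
      (fun i _ => le_of_lt (div_pos (ha i) (hφi i)))
      (fun i _ => (hφi i).le)
      (fun i _ => by
        rw [Real.sq_sqrt (ha i).le, div_mul_cancel₀ _ (hφi i).ne'])
  have h3 : (∑ i, Real.sqrt (a i)) ^ 2 / φ ≤ ∑ i, a i / φi i := by
    rw [div_le_iff₀ hφ]
    calc (∑ i, Real.sqrt (a i)) ^ 2 ≤ (∑ i, a i / φi i) * (∑ i, φi i) := hCS
      _ ≤ (∑ i, a i / φi i) * φ :=
        mul_le_mul_of_nonneg_left hφsum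
          (Finset.sum_nonneg fun i _ => (div_pos (ha i) (hφi i)).le)
  linarith
end
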